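/- arXiv:1306.6367 — 5 statements merged into one kernel-verified Lean document; each statement's English description precedes it below -/
import Mathlib

section
/- Let n ≥ 2, let U ⊆ ℝ^{n+1} be open, and let y_1,…,y_{n−1}, z : U → ℝ be smooth functions satisfying the foliation equations (E1), (E2), (E3) for all 1 ≤ a,b ≤ n−1 at every point of U. Then for all 1 ≤ a,b ≤ n−1, the function Λ_{a,b} = (∂y_a/∂y_n)(∂y_b/∂x_n) − (∂y_b/∂y_n)(∂y_a/∂x_n) + ∂y_a/∂x_b − ∂y_b/∂x_a vanishes identically on U. -/
open scoped BigOperators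

/-- Partial derivative of `f` in the `i`-th coordinate direction. -/
noncomputable def pd {m : ℕ} (i : Fin m) (f : (Fin m → ℝ) → ℝ) (p : Fin m → ℝ) : ℝ :=
  fderiv ℝ f p (Pi.single i 1)

/-- Index of the coordinate `x_a` (for `1 ≤ a ≤ n-1`) in `ℝ^{n+1}` with
coordinates `(x_1, …, x_n, y_n)`. -/
def xIdx {n : ℕ} (a : Fin (n - 1)) : Fin (n + 1) := Fin.castLE (by omega) a

/-- Index of the coordinate `x_n`. -/
def xnIdx (n : ℕ) : Fin (n + 1) := ⟨n - 1, by omega⟩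

/-- Index of the coordinate `y_n`. -/
def ynIdx (n : ℕ) : Fin (n + 1) := ⟨n, by omega⟩

/-- Equation (E0). -/
noncomputable def E0 {n : ℕ} (y : Fin (n - 1) → (Fin (n + 1) → ℝ) → ℝ)
    (z : (Fin (n + 1) → ℝ) → ℝ) (a b c : Fin (n - 1)) (p : Fin (n + 1) → ℝ) : ℝ :=
  (pd (xIdx a) z p - y a p) * (pd (xIdx c) (y b) p - pd (xIdx b) (y c) p)
    - (pd (xIdx b) z p - y b p) * (pd (xIdx c) (y a) p - pd (xIdx a) (y c) p)
    + (pd (xIdx c) z p - y c p) * (pd (xIdx b) (y a) p - pd (xIdx a) (y b) p)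

/-- Equation (E1). -/
noncomputable def E1 {n : ℕ} (y : Fin (n - 1) → (Fin (n + 1) → ℝ) → ℝ)
    (z : (Fin (n + 1) → ℝ) → ℝ) (a b : Fin (n - 1)) (p : Fin (n + 1) → ℝ) : ℝ :=
  (pd (xIdx a) z p - y a p) * pd (xnIdx n) (y b) p
    - (pd (xIdx b) z p - y b p) * pd (xnIdx n) (y a) p
    + (pd (xnIdx n) z p - p (ynIdx n)) * (pd (xIdx b) (y a) p - pd (xIdx a) (y b) p)

/-- Equation (E2). -/
noncomputable def E2 {n : ℕ} (y : Fin (n - 1) → (Fin (n + 1) → ℝ) → ℝ)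
    (z : (Fin (n + 1) → ℝ) → ℝ) (a b : Fin (n - 1)) (p : Fin (n + 1) → ℝ) : ℝ :=
  (pd (xIdx a) z p - y a p) * pd (ynIdx n) (y b) p
    - (pd (xIdx b) z p - y b p) * pd (ynIdx n) (y a) p
    + pd (ynIdx n) z p * (pd (xIdx b) (y a) p - pd (xIdx a) (y b) p)

/-- Equation (E3). -/
noncomputable def E3 {n : ℕ} (y : Fin (n - 1) → (Fin (n + 1) → ℝ) → ℝ)
    (z : (Fin (n + 1) → ℝ) → ℝ) (a : Fin (n - 1)) (p : Fin (n + 1) → ℝ) : ℝ :=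
  pd (xIdx a) z p - (pd (xnIdx n) z p - p (ynIdx n)) * pd (ynIdx n) (y a) p
    + pd (ynIdx n) z p * pd (xnIdx n) (y a) p - y a p

/-- The function `Λ_{a,b}`. -/
noncomputable def Lam {n : ℕ} (y : Fin (n - 1) → (Fin (n + 1) → ℝ) → ℝ)
    (a b : Fin (n - 1)) (p : Fin (n + 1) → ℝ) : ℝ :=
  pd (ynIdx n) (y a) p * pd (xnIdx n) (y b) p - pd (ynIdx n) (y b) p * pd (xnIdx n) (y a) p
    + pd (xIdx b) (y a) p - pd (xIdx a) (y b) p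

/-- The graph map `F : ℝ^{n+1} → ℝ^{2n+1}`,
`F(x_1,…,x_n,y_n) = (x_1,…,x_n,y_1,…,y_{n-1},y_n,z)`. -/
noncomputable def graphMap (n : ℕ) (y : Fin (n - 1) → (Fin (n + 1) → ℝ) → ℝ)
    (z : (Fin (n + 1) → ℝ) → ℝ) (p : Fin (n + 1) → ℝ) : Fin (2 * n + 1) → ℝ := fun i =>
  if h1 : (i : ℕ) < n then p ⟨i, by omega⟩
  else if h2 : (i : ℕ) < 2 * n - 1 then y ⟨(i : ℕ) - n, by omega⟩ p
  else if h3 : (i : ℕ) = 2 * n - 1 then p (ynIdx n)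
  else z p

/-- The standard contact form `α = dz - Σ y_i dx_i` on `ℝ^{2n+1}` with coordinates
`(x_1,…,x_n,y_1,…,y_n,z)`, evaluated at the point `q` on the vector `v`. -/
noncomputable def contactForm (n : ℕ) (q v : Fin (2 * n + 1) → ℝ) : ℝ :=
  v ⟨2 * n, by omega⟩
    - ∑ i : Fin n, q ⟨n + i, by have := i.isLt; omega⟩ * v ⟨i, by have := i.isLt; omega⟩

/-- The standard symplectic form `ω₀ = Σ dx_i ∧ dy_i = dα` on `ℝ^{2n+1}`. -/
noncomputable def omega0 (n : ℕ) (u v : Fin (2 * n + 1) → ℝ) : ℝ :=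
  ∑ i : Fin n, (u ⟨i, by have := i.isLt; omega⟩ * v ⟨n + i, by have := i.isLt; omega⟩
    - u ⟨n + i, by have := i.isLt; omega⟩ * v ⟨i, by have := i.isLt; omega⟩)

/-- The 3-form `α ∧ ω₀` evaluated at the point `q` on the vectors `u, v, w`. -/
noncomputable def awedge (n : ℕ) (q u v w : Fin (2 * n + 1) → ℝ) : ℝ :=
  contactForm n q u * omega0 n v w - contactForm n q v * omega0 n u w
    + contactForm n q w * omega0 n u v

/-- The vector field `Ṽ_k = ∂_{x_k} - (∂y_k/∂y_n) ∂_{x_n} + (∂y_k/∂x_n) ∂_{y_n}` on `ℝ^{n+1}`. -/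
noncomputable def Vt (n : ℕ) (y : Fin (n - 1) → (Fin (n + 1) → ℝ) → ℝ) (k : Fin (n - 1))
    (p : Fin (n + 1) → ℝ) : Fin (n + 1) → ℝ :=
  (Pi.single (xIdx k) 1 : Fin (n + 1) → ℝ)
    - pd (ynIdx n) (y k) p • (Pi.single (xnIdx n) 1 : Fin (n + 1) → ℝ)
    + pd (xnIdx n) (y k) p • (Pi.single (ynIdx n) 1 : Fin (n + 1) → ℝ)

/-!
Subtracting suitable multiples of (E3) from (E1) and (E2) gives
`(∂z/∂x_n - y_n) Λ_{a,b} = 0` and `(∂z/∂y_n) Λ_{a,b} = 0`. Suppose `Λ_{a,b}(p) ≠ 0`. Near `p`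
this forces `∂z/∂x_n = y_n` and `∂z/∂y_n = 0`, after which (E3) reads `∂z/∂x_c = y_c` for every
`c`. So near `p` each `y_c` is a partial derivative of `z`, and the symmetry of the second
derivative of `z` gives `∂y_a/∂y_n = ∂(∂z/∂y_n)/∂x_a = 0` and `∂y_a/∂x_b = ∂y_b/∂x_a`; hence
`Λ_{a,b}(p) = 0`, a contradiction.
-/

open Filter Topology

section SecondDerivative

variable {𝕜 E F : Type*} [NontriviallyNormedField 𝕜] [NormedAddCommGroup E] [NormedSpace 𝕜 E]
  [NormedAddCommGroup F] [NormedSpace 𝕜 F] {f : E → F} {p : E}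

lemma fderiv_fderiv_apply_const (hf : DifferentiableAt 𝕜 (fderiv 𝕜 f) p) (v w : E) :
    fderiv 𝕜 (fun q => fderiv 𝕜 f q v) p w = fderiv 𝕜 (fderiv 𝕜 f) p w v := by
  simp [fderiv_clm_apply hf (differentiableAt_const v)]

lemma IsSymmSndFDerivAt.fderiv_apply_comm_of_eventuallyEq (hsymm : IsSymmSndFDerivAt 𝕜 f p)
    (hf : DifferentiableAt 𝕜 (fderiv 𝕜 f) p) {g₁ g₂ : E → F} {v₁ v₂ : E}
    (h₁ : g₁ =ᶠ[𝓝 p] fun q => fderiv 𝕜 f q v₁) (h₂ : g₂ =ᶠ[𝓝 p] fun q => fderiv 𝕜 f q v₂) :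
    fderiv 𝕜 g₁ p v₂ = fderiv 𝕜 g₂ p v₁ := by
  rw [h₁.fderiv_eq, h₂.fderiv_eq, fderiv_fderiv_apply_const hf, fderiv_fderiv_apply_const hf,
    hsymm.eq]

end SecondDerivative

lemma ContDiffOn.continuousOn_pd {m : ℕ} {f : (Fin m → ℝ) → ℝ} {U : Set (Fin m → ℝ)}
    (hf : ContDiffOn ℝ 1 f U) (hU : IsOpen U) (i : Fin m) : ContinuousOn (pd i f) U :=
  (hf.continuousOn_fderiv_of_isOpen hU le_rfl).clm_apply continuousOn_const

section Foliation

variable {n : ℕ} {y : Fin (n - 1) → (Fin (n + 1) → ℝ) → ℝ} {z : (Fin (n + 1) → ℝ) → ℝ}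

lemma continuousOn_Lam {U : Set (Fin (n + 1) → ℝ)} (hU : IsOpen U)
    (hy : ∀ a, ContDiffOn ℝ 1 (y a) U) (a b : Fin (n - 1)) : ContinuousOn (Lam y a b) U := by
  have h c i := (hy c).continuousOn_pd hU i
  exact ((((h a _).mul (h b _)).sub ((h b _).mul (h a _))).add (h a _)).sub (h b _)

variable (y z) in
lemma E1_sub_E3_eq_mul_Lam (a b : Fin (n - 1)) (p : Fin (n + 1) → ℝ) :
    E1 y z a b p - pd (xnIdx n) (y b) p * E3 y z a p + pd (xnIdx n) (y a) p * E3 y z b p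
      = (pd (xnIdx n) z p - p (ynIdx n)) * Lam y a b p := by
  unfold E1 E3 Lam
  ring

variable (y z) in
lemma E2_sub_E3_eq_mul_Lam (a b : Fin (n - 1)) (p : Fin (n + 1) → ℝ) :
    E2 y z a b p - pd (ynIdx n) (y b) p * E3 y z a p + pd (ynIdx n) (y a) p * E3 y z b p
      = pd (ynIdx n) z p * Lam y a b p := by
  unfold E2 E3 Lam
  ring

lemma pd_eq_of_Lam_ne_zero {a b : Fin (n - 1)} {p : Fin (n + 1) → ℝ}
    (hE1 : E1 y z a b p = 0) (hE2 : E2 y z a b p = 0) (hE3 : ∀ c, E3 y z c p = 0)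
    (hLam : Lam y a b p ≠ 0) :
    pd (ynIdx n) z p = 0 ∧ ∀ c, pd (xIdx c) z p = y c p := by
  have hxn : pd (xnIdx n) z p - p (ynIdx n) = 0 := by
    have h := E1_sub_E3_eq_mul_Lam y z a b p
    rw [hE1, hE3, hE3] at h
    simpa [hLam] using h.symm
  have hyn : pd (ynIdx n) z p = 0 := by
    have h := E2_sub_E3_eq_mul_Lam y z a b p
    rw [hE2, hE3, hE3] at h
    simpa [hLam] using h.symm
  refine ⟨hyn, fun c => ?_⟩
  have h := hE3 c
  unfold E3 at h
  rw [hxn, hyn] at h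
  linarith

end Foliation

theorem lambda_vanishes_general (n : ℕ) (U : Set (Fin (n + 1) → ℝ)) (hU : IsOpen U)
    (y : Fin (n - 1) → (Fin (n + 1) → ℝ) → ℝ) (z : (Fin (n + 1) → ℝ) → ℝ)
    (hy : ∀ a, ContDiffOn ℝ (⊤ : ℕ∞) (y a) U) (hz : ContDiffOn ℝ (⊤ : ℕ∞) z U)
    (hE1 : ∀ a b, ∀ p ∈ U, E1 y z a b p = 0)
    (hE2 : ∀ a b, ∀ p ∈ U, E2 y z a b p = 0)
    (hE3 : ∀ a, ∀ p ∈ U, E3 y z a p = 0) :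
    ∀ a b, ∀ p ∈ U, Lam y a b p = 0 := by
  intro a b p hp
  by_contra hLam
  have hpU : U ∈ 𝓝 p := hU.mem_nhds hp
  have hLam_near : ∀ᶠ q in 𝓝 p, q ∈ U ∧ Lam y a b q ≠ 0 :=
    Filter.Eventually.and hpU <| ((continuousOn_Lam hU (fun c => (hy c).of_le
      (WithTop.coe_le_coe.2 le_top)) a b).continuousAt hpU).eventually_ne hLam
  have hpd : ∀ᶠ q in 𝓝 p, pd (ynIdx n) z q = 0 ∧ ∀ c, pd (xIdx c) z q = y c q :=
    hLam_near.mono fun q ⟨hq, hq'⟩ => pd_eq_of_Lam_ne_zero (hE1 a b q hq) (hE2 a b q hq)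
      (fun c => hE3 c q hq) hq'
  have hz2 : ContDiffAt ℝ 2 z p := (hz.contDiffAt hpU).of_le (WithTop.coe_le_coe.2 le_top)
  have hsymm := hz2.isSymmSndFDerivAt (by simp [minSmoothness_of_isRCLikeNormedField])
  have hdiff : DifferentiableAt ℝ (fderiv ℝ z) p :=
    (hz2.fderiv_right (m := 1) (by norm_num)).differentiableAt one_ne_zero
  have hy_eq c : y c =ᶠ[𝓝 p] fun q => fderiv ℝ z q (Pi.single (xIdx c) 1) :=
    hpd.mono fun q hq => (hq.2 c).symm
  have hzero : (fun _ => (0 : ℝ)) =ᶠ[𝓝 p] fun q => fderiv ℝ z q (Pi.single (ynIdx n) 1) :=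
    hpd.mono fun q hq => hq.1.symm
  have hQ c : pd (ynIdx n) (y c) p = 0 := by
    simpa [pd] using hsymm.fderiv_apply_comm_of_eventuallyEq hdiff (hy_eq c) hzero
  have hS : pd (xIdx b) (y a) p = pd (xIdx a) (y b) p :=
    hsymm.fderiv_apply_comm_of_eventuallyEq hdiff (hy_eq a) (hy_eq b)
  exact hLam (by rw [Lam, hQ, hQ, hS]; ring)

/-- If the foliation equations (E1), (E2), (E3) hold on `U`, then
`Λ_{a,b}` vanishes identically on `U`. -/
theorem lambda_vanishes (n : ℕ) (hn : 2 ≤ n) (U : Set (Fin (n + 1) → ℝ)) (hU : IsOpen U)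
    (y : Fin (n - 1) → (Fin (n + 1) → ℝ) → ℝ) (z : (Fin (n + 1) → ℝ) → ℝ)
    (hy : ∀ a, ContDiffOn ℝ (⊤ : ℕ∞) (y a) U) (hz : ContDiffOn ℝ (⊤ : ℕ∞) z U)
    (hE1 : ∀ a b, ∀ p ∈ U, E1 y z a b p = 0)
    (hE2 : ∀ a b, ∀ p ∈ U, E2 y z a b p = 0)
    (hE3 : ∀ a, ∀ p ∈ U, E3 y z a p = 0) :
    ∀ a b, ∀ p ∈ U, Lam y a b p = 0 :=
  lambda_vanishes_general n U hU y z hy hz hE1 hE2 hE3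
end

section
/- Let n ≥ 2, let U ⊆ ℝ^{n+1} be open, and let y_1,…,y_{n−1}, z : U → ℝ be smooth functions satisfying equations (E1), (E2), (E3) for all 1 ≤ a,b ≤ n−1 at every point of U. Then equation (E0) also holds at every point of U for all 1 ≤ a,b,c ≤ n−1; i.e., equation (E0) is redundant given (E1), (E2), (E3). -/
open scoped BigOperators

/-!
The proof is pointwise linear algebra. Write `A_a = ∂z/∂x_a − y_a`, `P = ∂z/∂x_n − y_n`,
`Q = ∂z/∂y_n`, and let `M_ab = ∂y_a/∂x_b − ∂y_b/∂x_a`, so that (E0) says `A ∧ M = 0`.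
(E1) says `P M = −A ∧ ∂_{x_n} y`, hence `P (A ∧ M) = −A ∧ A ∧ ∂_{x_n} y = 0`; likewise (E2) gives
`Q (A ∧ M) = 0`. If `P = Q = 0`, then (E3), which reads `A = P ∂_{y_n} y − Q ∂_{x_n} y`,
forces `A = 0`.
-/

section Wedge

variable {ι R : Type*} [CommRing R]

def wedge2 (A X : ι → R) (i j : ι) : R :=
  A i * X j - A j * X i

/-- `(A ∧ M)(e_a, e_b, e_c)` for a 1-form `A` and a 2-form `M`. -/
def wedge3 (A : ι → R) (M : ι → ι → R) (a b c : ι) : R :=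
  A a * M b c - A b * M a c + A c * M a b

theorem wedge3_wedge2_self (A X : ι → R) (a b c : ι) : wedge3 A (wedge2 A X) a b c = 0 := by
  simp only [wedge3, wedge2]
  ring

theorem mul_wedge3_eq_zero {A X : ι → R} {M : ι → ι → R} {P : R}
    (h : ∀ i j, wedge2 A X i j + P * M i j = 0) (a b c : ι) : P * wedge3 A M a b c = 0 := by
  have hAAX := wedge3_wedge2_self A X a b c
  simp only [wedge3] at hAAX ⊢
  linear_combination A a * h b c - A b * h a c + A c * h a b - hAAX

theorem wedge3_eq_zero [NoZeroDivisors R] {A X Y : ι → R} {M : ι → ι → R} {P Q : R}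
    (hX : ∀ i j, wedge2 A X i j + P * M i j = 0) (hY : ∀ i j, wedge2 A Y i j + Q * M i j = 0)
    (hA : ∀ i, A i = P * Y i - Q * X i) (a b c : ι) : wedge3 A M a b c = 0 := by
  by_cases hP : P = 0
  · by_cases hQ : Q = 0
    · have hA0 : A = 0 := funext fun i => by simp [hA, hP, hQ]
      simp [wedge3, hA0]
    · exact (mul_eq_zero.mp (mul_wedge3_eq_zero hY a b c)).resolve_left hQ
  · exact (mul_eq_zero.mp (mul_wedge3_eq_zero hX a b c)).resolve_left hP

end Wedge

theorem E0_redundant_general (n : ℕ) (U : Set (Fin (n + 1) → ℝ))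
    (y : Fin (n - 1) → (Fin (n + 1) → ℝ) → ℝ) (z : (Fin (n + 1) → ℝ) → ℝ)
    (hE1 : ∀ a b, ∀ p ∈ U, E1 y z a b p = 0)
    (hE2 : ∀ a b, ∀ p ∈ U, E2 y z a b p = 0)
    (hE3 : ∀ a, ∀ p ∈ U, E3 y z a p = 0) :
    ∀ a b c, ∀ p ∈ U, E0 y z a b c p = 0 := by
  intro a b c p hp
  have hA : ∀ i, pd (xIdx i) z p - y i p =
      (pd (xnIdx n) z p - p (ynIdx n)) * pd (ynIdx n) (y i) p
        - pd (ynIdx n) z p * pd (xnIdx n) (y i) p := fun i => by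
    have h3 := hE3 i p hp
    unfold E3 at h3
    linear_combination h3
  exact wedge3_eq_zero (M := fun i j => pd (xIdx j) (y i) p - pd (xIdx i) (y j) p)
    (fun i j => hE1 i j p hp) (fun i j => hE2 i j p hp) hA a b c

/-- Equation (E0) is redundant given (E1), (E2), (E3). -/
theorem E0_redundant (n : ℕ) (hn : 2 ≤ n) (U : Set (Fin (n + 1) → ℝ)) (hU : IsOpen U)
    (y : Fin (n - 1) → (Fin (n + 1) → ℝ) → ℝ) (z : (Fin (n + 1) → ℝ) → ℝ)
    (hy : ∀ a, ContDiffOn ℝ (⊤ : ℕ∞) (y a) U) (hz : ContDiffOn ℝ (⊤ : ℕ∞) z U)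
    (hE1 : ∀ a b, ∀ p ∈ U, E1 y z a b p = 0)
    (hE2 : ∀ a b, ∀ p ∈ U, E2 y z a b p = 0)
    (hE3 : ∀ a, ∀ p ∈ U, E3 y z a p = 0) :
    ∀ a b c, ∀ p ∈ U, E0 y z a b c p = 0 :=
  E0_redundant_general n U y z hE1 hE2 hE3
end

section
/- Let n ≥ 2, let U ⊆ ℝ^{n+1} be open, and let y_1,…,y_{n−1}, z : U → ℝ be smooth functions satisfying equation (E3) for all 1 ≤ a ≤ n−1 at every point of U. Then for every 1 ≤ k ≤ n−1 and every p ∈ U, the vector V_k(p) = dF_p(Ṽ_k(p)) lies in the kernel of the standard contact form: α_{F(p)}(V_k(p)) = 0. -/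
/-!
Along the graph map the contact form pulls back to `F*α = dz - Σ_{a<n} y_a dx_a - y_n dx_n`.
On `Ṽ_k` the `dx_a` pick out `a = k` and `dx_n` gives `-∂y_k/∂y_n`, so `α(V_k)` is exactly the
left-hand side of (E3). Where `F` is not differentiable, `fderiv` is `0` and so is `α`.
-/

open scoped BigOperators

section GraphMap

variable {n : ℕ} {y : Fin (n - 1) → (Fin (n + 1) → ℝ) → ℝ} {z : (Fin (n + 1) → ℝ) → ℝ}

theorem graphMap_apply_val (x : Fin (n + 1) → ℝ) (i : Fin n) (h : (i : ℕ) < 2 * n + 1) :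
    graphMap n y z x ⟨i, h⟩ = x i.castSucc :=
  dif_pos i.isLt

theorem graphMap_apply_add (x : Fin (n + 1) → ℝ) (a : Fin (n - 1)) (h : n + a < 2 * n + 1) :
    graphMap n y z x ⟨n + a, h⟩ = y a x := by
  have := a.isLt
  rw [graphMap, dif_neg (by simp), dif_pos (by simp; omega)]
  simp

theorem graphMap_apply_add_sub_one (x : Fin (n + 1) → ℝ) (h : n + (n - 1) < 2 * n + 1) :
    graphMap n y z x ⟨n + (n - 1), h⟩ = x (ynIdx n) := by
  rw [graphMap, dif_neg (by simp), dif_neg (by simp; omega), dif_pos (by simp; omega)]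

theorem graphMap_apply_two_mul (hn : n ≠ 0) (x : Fin (n + 1) → ℝ) :
    graphMap n y z x ⟨2 * n, by omega⟩ = z x := by
  rw [graphMap, dif_neg (by simp; omega), dif_neg (by simp), dif_neg (by simp; omega)]

end GraphMap

theorem fderiv_Vt (n : ℕ) (y : Fin (n - 1) → (Fin (n + 1) → ℝ) → ℝ) (k : Fin (n - 1))
    (f : (Fin (n + 1) → ℝ) → ℝ) (p : Fin (n + 1) → ℝ) :
    fderiv ℝ f p (Vt n y k p) = pd (xIdx k) f p - pd (ynIdx n) (y k) p * pd (xnIdx n) f p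
      + pd (xnIdx n) (y k) p * pd (ynIdx n) f p := by
  simp only [Vt, map_add, map_sub, map_smul, smul_eq_mul, pd]

theorem sum_mul_Vt_castSucc (n : ℕ) (y : Fin (n - 1) → (Fin (n + 1) → ℝ) → ℝ) (k : Fin (n - 1))
    (p : Fin (n + 1) → ℝ) (c : Fin n → ℝ) :
    ∑ i, c i * Vt n y k p i.castSucc
      = c ⟨k, by have := k.isLt; omega⟩
        - pd (ynIdx n) (y k) p * c ⟨n - 1, by have := k.isLt; omega⟩ := by
  have hk : xIdx k = Fin.castSucc ⟨k, by have := k.isLt; omega⟩ := rfl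
  have hxn : xnIdx n = Fin.castSucc ⟨n - 1, by have := k.isLt; omega⟩ := rfl
  have hyn : ynIdx n = Fin.last n := rfl
  simp [Vt, hk, hxn, hyn, Pi.single_apply, Fin.castSucc_ne_last, -Fin.castSucc_mk, mul_sub,
    Finset.sum_sub_distrib, mul_comm]

theorem contactForm_graphMap_fderiv {n : ℕ} {y : Fin (n - 1) → (Fin (n + 1) → ℝ) → ℝ}
    {z : (Fin (n + 1) → ℝ) → ℝ} {p : Fin (n + 1) → ℝ} (hn : n ≠ 0)
    (hF : DifferentiableAt ℝ (graphMap n y z) p) (v : Fin (n + 1) → ℝ) :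
    contactForm n (graphMap n y z p) (fderiv ℝ (graphMap n y z) p v)
      = fderiv ℝ z p v - ∑ i : Fin n,
          graphMap n y z p ⟨n + i, by have := i.isLt; omega⟩ * v i.castSucc := by
  have hcomp : ∀ j, fderiv ℝ (graphMap n y z) p v j = fderiv ℝ (graphMap n y z · j) p v :=
    fun j => by rw [fderiv_apply hF]; rfl
  have hproj : ∀ j, fderiv ℝ (fun x : Fin (n + 1) → ℝ ↦ x j) p = ContinuousLinearMap.proj j :=
    fun j => (hasFDerivAt_apply j p).fderiv
  simp only [contactForm, hcomp, graphMap_apply_val, graphMap_apply_two_mul hn, hproj]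
  rfl

theorem contactForm_graphMap_fderiv_Vt {n : ℕ} {y : Fin (n - 1) → (Fin (n + 1) → ℝ) → ℝ}
    {z : (Fin (n + 1) → ℝ) → ℝ} {p : Fin (n + 1) → ℝ}
    (hF : DifferentiableAt ℝ (graphMap n y z) p) (k : Fin (n - 1)) :
    contactForm n (graphMap n y z p) (fderiv ℝ (graphMap n y z) p (Vt n y k p)) = E3 y z k p := by
  have hn : n ≠ 0 := by have := k.isLt; omega
  rw [contactForm_graphMap_fderiv hn hF, fderiv_Vt, sum_mul_Vt_castSucc]
  simp only [graphMap_apply_add, graphMap_apply_add_sub_one, E3]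
  ring

theorem Vk_in_ker_alpha_general (n : ℕ) (U : Set (Fin (n + 1) → ℝ))
    (y : Fin (n - 1) → (Fin (n + 1) → ℝ) → ℝ) (z : (Fin (n + 1) → ℝ) → ℝ)
    (hE3 : ∀ a, ∀ p ∈ U, E3 y z a p = 0) :
    ∀ k : Fin (n - 1), ∀ p ∈ U,
      contactForm n (graphMap n y z p) (fderiv ℝ (graphMap n y z) p (Vt n y k p)) = 0 := by
  intro k p hp
  by_cases hF : DifferentiableAt ℝ (graphMap n y z) p
  · rw [contactForm_graphMap_fderiv_Vt hF, hE3 k p hp]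
  · simp [fderiv_zero_of_not_differentiableAt hF, contactForm]

/-- If (E3) holds on `U`, then `V_k = dF(Ṽ_k)` lies in the kernel of the
standard contact form `α`. -/
theorem Vk_in_ker_alpha (n : ℕ) (hn : 2 ≤ n) (U : Set (Fin (n + 1) → ℝ)) (hU : IsOpen U)
    (y : Fin (n - 1) → (Fin (n + 1) → ℝ) → ℝ) (z : (Fin (n + 1) → ℝ) → ℝ)
    (hy : ∀ a, ContDiffOn ℝ (⊤ : ℕ∞) (y a) U) (hz : ContDiffOn ℝ (⊤ : ℕ∞) z U)
    (hE3 : ∀ a, ∀ p ∈ U, E3 y z a p = 0) :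
    ∀ k : Fin (n - 1), ∀ p ∈ U,
      contactForm n (graphMap n y z p) (fderiv ℝ (graphMap n y z) p (Vt n y k p)) = 0 :=
  Vk_in_ker_alpha_general n U y z hE3
end

section
/- Let n ≥ 2, let U ⊆ ℝ^{n+1} be open, and let y_1,…,y_{n−1}, z : U → ℝ be smooth functions satisfying equations (E1), (E2), (E3) for all 1 ≤ a,b ≤ n−1 at every point of U. Then the vector fields Ṽ_k = ∂_{x_k} − (∂y_k/∂y_n)∂_{x_n} + (∂y_k/∂x_n)∂_{y_n}, 1 ≤ k ≤ n−1, pairwise commute: [Ṽ_k, Ṽ_l] = 0 on U for all 1 ≤ k,l ≤ n−1. -/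
/-! Write `u_a = ∂y_a/∂y_n` and `w_a = ∂y_a/∂x_n`. Once mixed partials of the `y_a` are swapped,
the two non-zero components of `[Ṽ_k, Ṽ_l]` are exactly `-∂_{y_n} Λ_{lk}` and `∂_{x_n} Λ_{lk}`,
so it suffices that `Λ` vanishes on `U`.

Eliminating `∂z/∂x_a` with (E3) turns (E1) and (E2) into `(∂z/∂x_n - y_n) Λ_{ab} = 0` and
`(∂z/∂y_n) Λ_{ab} = 0`. Near a point where `Λ_{ab} ≠ 0` these force `∂z/∂y_n = 0` and
`∂z/∂x_n = y_n`, and then (E3) gives `∂z/∂x_a = y_a`. So there the `y_a` are partial derivatives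
of `z`, and the symmetry of the second derivative of `z` gives `Λ_{ab} = 0` after all. -/

open scoped BigOperators

open Filter Topology

section PartialDerivatives

variable {m : ℕ} {f g : (Fin m → ℝ) → ℝ} {p : Fin m → ℝ}

theorem pd_add (hf : DifferentiableAt ℝ f p) (hg : DifferentiableAt ℝ g p) (i : Fin m) :
    pd i (f + g) p = pd i f p + pd i g p := by
  simp [pd, fderiv_add hf hg]

theorem pd_sub (hf : DifferentiableAt ℝ f p) (hg : DifferentiableAt ℝ g p) (i : Fin m) :
    pd i (f - g) p = pd i f p - pd i g p := by
  simp [pd, fderiv_sub hf hg]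

theorem pd_mul (hf : DifferentiableAt ℝ f p) (hg : DifferentiableAt ℝ g p) (i : Fin m) :
    pd i (f * g) p = f p * pd i g p + pd i f p * g p := by
  simp [pd, fderiv_mul hf hg, mul_comm]

theorem Filter.EventuallyEq.pd_eq (h : f =ᶠ[𝓝 p] g) (i : Fin m) : pd i f p = pd i g p := by
  rw [pd, h.fderiv_eq, pd]

@[simp]
theorem pd_zero (i : Fin m) : pd i (0 : (Fin m → ℝ) → ℝ) p = 0 := by
  simp [pd]

theorem pd_coord (i j : Fin m) : pd i (fun q => q j) p = (Pi.single i 1 : Fin m → ℝ) j := by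
  simp [pd, fderiv_apply]

theorem differentiableAt_pd (hf : ContDiffAt ℝ 2 f p) (i : Fin m) :
    DifferentiableAt ℝ (pd i f) p :=
  ((hf.fderiv_right (m := 1) le_rfl).differentiableAt one_ne_zero).clm_apply
    (differentiableAt_const _)

theorem pd_pd_eq (hf : ContDiffAt ℝ 2 f p) (i j : Fin m) :
    pd i (pd j f) p = fderiv ℝ (fderiv ℝ f) p (Pi.single i 1) (Pi.single j 1) := by
  have hf' := (hf.fderiv_right (m := 1) le_rfl).differentiableAt one_ne_zero
  change fderiv ℝ (fun q => fderiv ℝ f q (Pi.single j 1)) p _ = _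
  simp [fderiv_clm_apply hf' (differentiableAt_const _)]

theorem pd_pd_comm (hf : ContDiffAt ℝ 2 f p) (i j : Fin m) :
    pd i (pd j f) p = pd j (pd i f) p := by
  rw [pd_pd_eq hf, pd_pd_eq hf, (hf.isSymmSndFDerivAt (by simp)).eq]

end PartialDerivatives

section VectorFields

variable {n : ℕ} {y : Fin (n - 1) → (Fin (n + 1) → ℝ) → ℝ} {p : Fin (n + 1) → ℝ}

theorem fderiv_apply_Vt (g : (Fin (n + 1) → ℝ) → ℝ) (k : Fin (n - 1)) :
    fderiv ℝ g p (Vt n y k p) = pd (xIdx k) g p - pd (ynIdx n) (y k) p * pd (xnIdx n) g p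
      + pd (xnIdx n) (y k) p * pd (ynIdx n) g p := by
  simp [Vt, pd]

theorem fderiv_Vt_apply {k : Fin (n - 1)} (hk : ContDiffAt ℝ 2 (y k) p)
    (v : Fin (n + 1) → ℝ) :
    fderiv ℝ (Vt n y k) p v = fderiv ℝ (pd (xnIdx n) (y k)) p v • Pi.single (ynIdx n) 1
      - fderiv ℝ (pd (ynIdx n) (y k)) p v • Pi.single (xnIdx n) 1 := by
  have hu := differentiableAt_pd hk (ynIdx n)
  have hw := differentiableAt_pd hk (xnIdx n)
  have h : HasFDerivAt (Vt n y k) _ p :=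
    ((hu.hasFDerivAt.smul_const (Pi.single (xnIdx n) 1 : Fin (n + 1) → ℝ)).const_sub
      (Pi.single (xIdx k) 1)).add (hw.hasFDerivAt.smul_const (Pi.single (ynIdx n) 1))
  rw [h.fderiv]
  simp only [add_apply, neg_apply, ContinuousLinearMap.smulRight_apply]
  abel

theorem Lam_def (a b : Fin (n - 1)) :
    Lam y a b = pd (ynIdx n) (y a) * pd (xnIdx n) (y b) - pd (ynIdx n) (y b) * pd (xnIdx n) (y a)
      + pd (xIdx b) (y a) - pd (xIdx a) (y b) := rfl

theorem pd_Lam {a b : Fin (n - 1)} (ha : ContDiffAt ℝ 2 (y a) p) (hb : ContDiffAt ℝ 2 (y b) p)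
    (i : Fin (n + 1)) :
    pd i (Lam y a b) p =
      pd (ynIdx n) (y a) p * pd i (pd (xnIdx n) (y b)) p
        + pd i (pd (ynIdx n) (y a)) p * pd (xnIdx n) (y b) p
        - (pd (ynIdx n) (y b) p * pd i (pd (xnIdx n) (y a)) p
          + pd i (pd (ynIdx n) (y b)) p * pd (xnIdx n) (y a) p)
        + pd i (pd (xIdx b) (y a)) p - pd i (pd (xIdx a) (y b)) p := by
  have := differentiableAt_pd ha
  have := differentiableAt_pd hb
  simp (disch := fun_prop) only [Lam_def, pd_sub, pd_add, pd_mul]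

theorem bracket_Vt_eq {k l : Fin (n - 1)} (hk : ContDiffAt ℝ 2 (y k) p)
    (hl : ContDiffAt ℝ 2 (y l) p) :
    fderiv ℝ (Vt n y l) p (Vt n y k p) - fderiv ℝ (Vt n y k) p (Vt n y l p) =
      pd (xnIdx n) (Lam y l k) p • Pi.single (ynIdx n) 1
        - pd (ynIdx n) (Lam y l k) p • Pi.single (xnIdx n) 1 := by
  have hw : fderiv ℝ (pd (xnIdx n) (y l)) p (Vt n y k p)
      - fderiv ℝ (pd (xnIdx n) (y k)) p (Vt n y l p) = pd (xnIdx n) (Lam y l k) p := by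
    rw [fderiv_apply_Vt, fderiv_apply_Vt, pd_Lam hl hk]
    linear_combination pd_pd_comm hl (xIdx k) (xnIdx n)
      + pd (xnIdx n) (y k) p * pd_pd_comm hl (ynIdx n) (xnIdx n)
      - pd_pd_comm hk (xIdx l) (xnIdx n) - pd (xnIdx n) (y l) p * pd_pd_comm hk (ynIdx n) (xnIdx n)
  have hu : fderiv ℝ (pd (ynIdx n) (y l)) p (Vt n y k p)
      - fderiv ℝ (pd (ynIdx n) (y k)) p (Vt n y l p) = pd (ynIdx n) (Lam y l k) p := by
    rw [fderiv_apply_Vt, fderiv_apply_Vt, pd_Lam hl hk]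
    linear_combination pd_pd_comm hl (xIdx k) (ynIdx n)
      - pd (ynIdx n) (y k) p * pd_pd_comm hl (xnIdx n) (ynIdx n)
      - pd_pd_comm hk (xIdx l) (ynIdx n) + pd (ynIdx n) (y l) p * pd_pd_comm hk (xnIdx n) (ynIdx n)
  rw [fderiv_Vt_apply hl, fderiv_Vt_apply hk, ← hw, ← hu]
  module

end VectorFields

section LambdaVanishes

variable {n : ℕ} {y : Fin (n - 1) → (Fin (n + 1) → ℝ) → ℝ} {z : (Fin (n + 1) → ℝ) → ℝ}
  {a b : Fin (n - 1)} {q : Fin (n + 1) → ℝ}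

theorem xIdx_ne_ynIdx (c : Fin (n - 1)) : xIdx c ≠ ynIdx n := by
  simp only [Ne, Fin.ext_iff, xIdx, ynIdx, Fin.val_castLE]
  omega

theorem mul_Lam_eq_E1_add_E3 (a b : Fin (n - 1)) (q : Fin (n + 1) → ℝ) :
    (pd (xnIdx n) z q - q (ynIdx n)) * Lam y a b q =
      E1 y z a b q - pd (xnIdx n) (y b) q * E3 y z a q + pd (xnIdx n) (y a) q * E3 y z b q := by
  simp only [E1, E3, Lam]
  ring

theorem mul_Lam_eq_E2_add_E3 (a b : Fin (n - 1)) (q : Fin (n + 1) → ℝ) :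
    pd (ynIdx n) z q * Lam y a b q =
      E2 y z a b q - pd (ynIdx n) (y b) q * E3 y z a q + pd (ynIdx n) (y a) q * E3 y z b q := by
  simp only [E2, E3, Lam]
  ring

theorem continuousAt_Lam (ha : ContDiffAt ℝ 2 (y a) q) (hb : ContDiffAt ℝ 2 (y b) q) :
    ContinuousAt (Lam y a b) q := by
  have := fun i => (differentiableAt_pd ha i).continuousAt
  have := fun i => (differentiableAt_pd hb i).continuousAt
  rw [Lam_def]
  fun_prop

theorem Lam_eq_zero_of_eventuallyEq (hz : ContDiffAt ℝ 2 z q)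
    (ha : pd (xIdx a) z =ᶠ[𝓝 q] y a) (hb : pd (xIdx b) z =ᶠ[𝓝 q] y b)
    (hxn : pd (xnIdx n) z =ᶠ[𝓝 q] fun r => r (ynIdx n)) (hyn : pd (ynIdx n) z =ᶠ[𝓝 q] 0) :
    Lam y a b q = 0 := by
  have hpd : ∀ {c}, pd (xIdx c) z =ᶠ[𝓝 q] y c → ∀ i, pd i (y c) q = pd (xIdx c) (pd i z) q :=
    fun hc i => by rw [← hc.pd_eq, pd_pd_comm hz]
  have hu : ∀ {c}, pd (xIdx c) z =ᶠ[𝓝 q] y c → pd (ynIdx n) (y c) q = 0 := fun hc => by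
    rw [hpd hc, hyn.pd_eq, pd_zero]
  have hw : ∀ {c}, pd (xIdx c) z =ᶠ[𝓝 q] y c → pd (xnIdx n) (y c) q = 0 := fun hc => by
    rw [hpd hc, hxn.pd_eq, pd_coord, Pi.single_eq_of_ne (xIdx_ne_ynIdx _).symm]
  have hx : pd (xIdx b) (y a) q = pd (xIdx a) (y b) q := by
    rw [hpd ha, hb.pd_eq]
  simp only [Lam, hu ha, hu hb, hw ha, hw hb, hx]
  ring

theorem Lam_eq_zero (hz : ContDiffAt ℝ 2 z q) (ha : ContDiffAt ℝ 2 (y a) q)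
    (hb : ContDiffAt ℝ 2 (y b) q) (hE1 : ∀ᶠ r in 𝓝 q, E1 y z a b r = 0)
    (hE2 : ∀ᶠ r in 𝓝 q, E2 y z a b r = 0) (hE3a : ∀ᶠ r in 𝓝 q, E3 y z a r = 0)
    (hE3b : ∀ᶠ r in 𝓝 q, E3 y z b r = 0) :
    Lam y a b q = 0 := by
  by_contra hne
  have hΛ : ∀ᶠ r in 𝓝 q, Lam y a b r ≠ 0 := (continuousAt_Lam ha hb).eventually_ne hne
  have hyn : pd (ynIdx n) z =ᶠ[𝓝 q] 0 := by
    filter_upwards [hΛ, hE2, hE3a, hE3b] with r hr h2 h3a h3b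
    refine (mul_eq_zero.1 ?_).resolve_right hr
    rw [mul_Lam_eq_E2_add_E3, h2, h3a, h3b]
    ring
  have hxn : pd (xnIdx n) z =ᶠ[𝓝 q] fun r => r (ynIdx n) := by
    filter_upwards [hΛ, hE1, hE3a, hE3b] with r hr h1 h3a h3b
    refine sub_eq_zero.1 ((mul_eq_zero.1 ?_).resolve_right hr)
    rw [mul_Lam_eq_E1_add_E3, h1, h3a, h3b]
    ring
  have hx : ∀ {c}, (∀ᶠ r in 𝓝 q, E3 y z c r = 0) → pd (xIdx c) z =ᶠ[𝓝 q] y c := fun h3 => by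
    filter_upwards [h3, hxn, hyn] with r h3r hxnr hynr
    simpa [E3, hxnr, hynr, sub_eq_zero] using h3r
  exact hne (Lam_eq_zero_of_eventuallyEq hz (hx hE3a) (hx hE3b) hxn hyn)

end LambdaVanishes

theorem bracket_vanishes_general (n : ℕ) (U : Set (Fin (n + 1) → ℝ)) (hU : IsOpen U)
    (y : Fin (n - 1) → (Fin (n + 1) → ℝ) → ℝ) (z : (Fin (n + 1) → ℝ) → ℝ)
    (hy : ∀ a, ContDiffOn ℝ (⊤ : ℕ∞) (y a) U) (hz : ContDiffOn ℝ (⊤ : ℕ∞) z U)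
    (hE1 : ∀ a b, ∀ p ∈ U, E1 y z a b p = 0)
    (hE2 : ∀ a b, ∀ p ∈ U, E2 y z a b p = 0)
    (hE3 : ∀ a, ∀ p ∈ U, E3 y z a p = 0) :
    ∀ k l : Fin (n - 1), ∀ p ∈ U,
      fderiv ℝ (Vt n y l) p (Vt n y k p) - fderiv ℝ (Vt n y k) p (Vt n y l p) = 0 := by
  intro k l p hp
  have hC2 : ∀ {f : (Fin (n + 1) → ℝ) → ℝ}, ContDiffOn ℝ (⊤ : ℕ∞) f U → ∀ q ∈ U,
      ContDiffAt ℝ 2 f q := fun hf q hq =>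
    (hf.contDiffAt (hU.mem_nhds hq)).of_le (WithTop.coe_le_coe.2 le_top)
  have hnhds : ∀ {P : (Fin (n + 1) → ℝ) → Prop}, (∀ q ∈ U, P q) → ∀ q ∈ U, ∀ᶠ r in 𝓝 q, P r :=
    fun h q hq => eventually_of_mem (hU.mem_nhds hq) h
  have hLam : ∀ a b, ∀ q ∈ U, Lam y a b q = 0 := fun a b q hq =>
    Lam_eq_zero (hC2 hz q hq) (hC2 (hy a) q hq) (hC2 (hy b) q hq) (hnhds (hE1 a b) q hq)
      (hnhds (hE2 a b) q hq) (hnhds (hE3 a) q hq) (hnhds (hE3 b) q hq)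
  have hLam_nhds : Lam y l k =ᶠ[𝓝 p] 0 := hnhds (hLam l k) p hp
  rw [bracket_Vt_eq (hC2 (hy k) p hp) (hC2 (hy l) p hp), hLam_nhds.pd_eq, hLam_nhds.pd_eq]
  simp

/-- If (E1), (E2), (E3) hold on `U`, then the vector fields `Ṽ_k`
pairwise commute. -/
theorem bracket_vanishes (n : ℕ) (hn : 2 ≤ n) (U : Set (Fin (n + 1) → ℝ)) (hU : IsOpen U)
    (y : Fin (n - 1) → (Fin (n + 1) → ℝ) → ℝ) (z : (Fin (n + 1) → ℝ) → ℝ)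
    (hy : ∀ a, ContDiffOn ℝ (⊤ : ℕ∞) (y a) U) (hz : ContDiffOn ℝ (⊤ : ℕ∞) z U)
    (hE1 : ∀ a b, ∀ p ∈ U, E1 y z a b p = 0)
    (hE2 : ∀ a b, ∀ p ∈ U, E2 y z a b p = 0)
    (hE3 : ∀ a, ∀ p ∈ U, E3 y z a p = 0) :
    ∀ k l : Fin (n - 1), ∀ p ∈ U,
      fderiv ℝ (Vt n y l) p (Vt n y k p) - fderiv ℝ (Vt n y k) p (Vt n y l p) = 0 :=
  bracket_vanishes_general n U hU y z hy hz hE1 hE2 hE3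
end

section
/- Let n ≥ 2, let U ⊆ ℝ^{n+1} be open, and let y_1,…,y_{n−1}, z : U → ℝ be smooth functions satisfying equations (E1), (E2), (E3) at every point of U. Let μ = F*α be the pull-back of the standard contact form under the graph map, and fix 1 ≤ k ≤ n−1. If γ : I → U is an integral curve of Ṽ_k and μ_{γ(t_0)} = 0 (as a linear functional on ℝ^{n+1}) for some t_0 ∈ I, then μ_{γ(t)} = 0 for all t ∈ I. In other words, the singular locus S = {p ∈ U : μ_p = 0} is invariant under the flows of the vector fields Ṽ_1,…,Ṽ_{n−1}. -/
open scoped BigOperators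

/-! Write `μ = Σ_a A_a dx_a + B dx_n + C dy_n`. By (E3), `A_a = B ∂y_a/∂y_n - C ∂y_a/∂x_n`, so
`μ_p = 0` exactly when `B(p) = C(p) = 0`. Differentiating (E3) in the directions `x_n` and `y_n`
and using the symmetry of the second derivatives of `z` gives, along `Ṽ_k`, the linear system
`Ṽ_k B = D(∂_{x_n}, w)`, `Ṽ_k C = D(∂_{y_n}, w)` with `w = B ∂_{y_n} - C ∂_{x_n}` and `D` the
Hessian of `y_k`. Its coefficients are continuous along the integral curve, so by Grönwall
`(B, C)` vanishes on the whole curve once it vanishes at one time. -/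

open Set Filter Topology

section Gronwall
variable {E : Type*} [NormedAddCommGroup E] [NormedSpace ℝ E] {u u' : ℝ → E} {K : ℝ → ℝ}

theorem eq_zero_of_norm_deriv_le_mul_norm_of_eq_zero_right {a b : ℝ}
    (hK : ContinuousOn K (Icc a b)) (hu : ∀ t ∈ Icc a b, HasDerivAt u (u' t) t)
    (bound : ∀ t ∈ Icc a b, ‖u' t‖ ≤ K t * ‖u t‖) (ha : u a = 0) :
    ∀ t ∈ Icc a b, u t = 0 := by
  obtain ⟨R, hR⟩ := isCompact_Icc.exists_bound_of_continuousOn hK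
  refine eq_zero_of_abs_deriv_le_mul_abs_self_of_eq_zero_right (K := R)
    (fun t ht => (hu t ht).continuousAt.continuousWithinAt)
    (fun t ht => (hu t (Ico_subset_Icc_self ht)).hasDerivWithinAt) ha fun t ht => ?_
  replace ht := Ico_subset_Icc_self ht
  calc ‖u' t‖ ≤ K t * ‖u t‖ := bound t ht
    _ ≤ R * ‖u t‖ := by gcongr; exact (le_abs_self _).trans (hR t ht)

theorem eq_zero_of_norm_deriv_le_mul_norm_of_eq_zero_left {a b : ℝ}
    (hK : ContinuousOn K (Icc a b)) (hu : ∀ t ∈ Icc a b, HasDerivAt u (u' t) t)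
    (bound : ∀ t ∈ Icc a b, ‖u' t‖ ≤ K t * ‖u t‖) (hb : u b = 0) :
    ∀ t ∈ Icc a b, u t = 0 := by
  have hreflect := eq_zero_of_norm_deriv_le_mul_norm_of_eq_zero_right (a := -b) (b := -a)
    (u := fun s => u (-s)) (u' := fun s => -u' (-s)) (K := fun s => K (-s))
    (hK.comp continuousOn_neg fun s hs => neg_mem_Icc_iff.mpr hs)
    (fun s hs => by
      simpa [Function.comp_def] using (hu (-s) (neg_mem_Icc_iff.mpr hs)).scomp s (hasDerivAt_neg s))
    (fun s hs => by simpa using bound (-s) (neg_mem_Icc_iff.mpr hs))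
    (by simpa using hb)
  intro t ht
  simpa using hreflect (-t) (neg_mem_Icc_iff.mpr (by simpa using ht))

theorem Set.OrdConnected.eq_zero_of_norm_deriv_le_mul_norm {I : Set ℝ} (hI : I.OrdConnected)
    (hK : ContinuousOn K I) (hu : ∀ t ∈ I, HasDerivAt u (u' t) t)
    (bound : ∀ t ∈ I, ‖u' t‖ ≤ K t * ‖u t‖) {t₀ : ℝ} (ht₀ : t₀ ∈ I) (h₀ : u t₀ = 0) :
    ∀ t ∈ I, u t = 0 := by
  intro t ht
  rcases le_total t₀ t with h | h
  · have hsub := hI.out ht₀ ht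
    exact eq_zero_of_norm_deriv_le_mul_norm_of_eq_zero_right (hK.mono hsub)
      (fun s hs => hu s (hsub hs)) (fun s hs => bound s (hsub hs)) h₀ t (right_mem_Icc.mpr h)
  · have hsub := hI.out ht ht₀
    exact eq_zero_of_norm_deriv_le_mul_norm_of_eq_zero_left (hK.mono hsub)
      (fun s hs => hu s (hsub hs)) (fun s hs => bound s (hsub hs)) h₀ t (left_mem_Icc.mpr h)

end Gronwall

section Smooth
variable {E F : Type*} [NormedAddCommGroup E] [NormedSpace ℝ E] [NormedAddCommGroup F]
  [NormedSpace ℝ F] {f : E → F} {p : E}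

theorem ContDiffAt.hasFDerivAt_fderiv_apply (hf : ContDiffAt ℝ 2 f p) (v : E) :
    HasFDerivAt (fun q => fderiv ℝ f q v) ((fderiv ℝ (fderiv ℝ f) p).flip v) p := by
  have h : HasFDerivAt (fderiv ℝ f) (fderiv ℝ (fderiv ℝ f) p) p :=
    ((hf.fderiv_right (m := 1) le_rfl).differentiableAt one_ne_zero).hasFDerivAt
  exact (ContinuousLinearMap.apply ℝ F v).hasFDerivAt.comp p h

theorem ContDiffAt.fderiv_fderiv_comm (hf : ContDiffAt ℝ 2 f p) (v w : E) :
    fderiv ℝ (fderiv ℝ f) p v w = fderiv ℝ (fderiv ℝ f) p w v :=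
  hf.isSymmSndFDerivAt (by simp) v w

theorem ContDiffOn.continuousOn_fderiv_fderiv {U : Set E} (hf : ContDiffOn ℝ 2 f U)
    (hU : IsOpen U) : ContinuousOn (fderiv ℝ (fderiv ℝ f)) U :=
  (hf.fderiv_of_isOpen (m := 1) hU le_rfl).continuousOn_fderiv_of_isOpen hU le_rfl

end Smooth

theorem ContinuousLinearMap.eq_zero_of_apply_single {m : ℕ} (L : (Fin m → ℝ) →L[ℝ] ℝ)
    (h : ∀ j, L (Pi.single j 1) = 0) : L = 0 := by
  refine ContinuousLinearMap.coe_injective (LinearMap.pi_ext fun j x => ?_)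
  have hx : (Pi.single j x : Fin m → ℝ) = x • Pi.single j 1 := by simp [← Pi.single_smul]
  simp [hx, h j]

section Indices
variable {n : ℕ}

theorem ynIdx_ne_xIdx (hn : 2 ≤ n) (a : Fin (n - 1)) : ynIdx n ≠ xIdx a := by
  simp only [ynIdx, xIdx, ne_eq, Fin.ext_iff, Fin.val_castLE]
  omega

theorem ynIdx_ne_xnIdx (hn : 2 ≤ n) : ynIdx n ≠ xnIdx n := by
  simp only [ynIdx, xnIdx, ne_eq, Fin.ext_iff]
  omega

theorem exists_eq_xIdx_or_eq_xnIdx_or_eq_ynIdx (j : Fin (n + 1)) :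
    (∃ a, j = xIdx a) ∨ j = xnIdx n ∨ j = ynIdx n := by
  rcases lt_trichotomy (j : ℕ) (n - 1) with h | h | h
  · exact .inl ⟨⟨j, h⟩, Fin.ext rfl⟩
  · exact .inr (.inl (Fin.ext h))
  · exact .inr (.inr (Fin.ext (by simp [ynIdx]; omega)))

theorem Vt_apply_ynIdx (hn : 2 ≤ n) (y : Fin (n - 1) → (Fin (n + 1) → ℝ) → ℝ) (k : Fin (n - 1))
    (p : Fin (n + 1) → ℝ) : Vt n y k p (ynIdx n) = pd (xnIdx n) (y k) p := by
  simp [Vt, Pi.single_eq_of_ne (ynIdx_ne_xIdx hn k), Pi.single_eq_of_ne (ynIdx_ne_xnIdx hn)]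

end Indices

noncomputable def contactFormCLM (n : ℕ) (q : Fin (2 * n + 1) → ℝ) :
    (Fin (2 * n + 1) → ℝ) →L[ℝ] ℝ :=
  ContinuousLinearMap.proj ⟨2 * n, by omega⟩
    - ∑ i : Fin n, q ⟨n + i, by omega⟩ • ContinuousLinearMap.proj ⟨i, by omega⟩

theorem contactFormCLM_apply (n : ℕ) (q v : Fin (2 * n + 1) → ℝ) :
    contactFormCLM n q v = contactForm n q v := by
  simp [contactFormCLM, contactForm]

noncomputable def pullbackForm (n : ℕ) (y : Fin (n - 1) → (Fin (n + 1) → ℝ) → ℝ)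
    (z : (Fin (n + 1) → ℝ) → ℝ) (p : Fin (n + 1) → ℝ) : (Fin (n + 1) → ℝ) →L[ℝ] ℝ :=
  (contactFormCLM n (graphMap n y z p)).comp (fderiv ℝ (graphMap n y z) p)

/-- Writing `μ = Σ_a A_a dx_a + B dx_n + C dy_n`, `coeffB` is `B` and `coeffC` is `C`. -/
noncomputable def coeffB (n : ℕ) (z : (Fin (n + 1) → ℝ) → ℝ) (p : Fin (n + 1) → ℝ) : ℝ :=
  pd (xnIdx n) z p - p (ynIdx n)

noncomputable def coeffC (n : ℕ) (z : (Fin (n + 1) → ℝ) → ℝ) (p : Fin (n + 1) → ℝ) : ℝ :=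
  pd (ynIdx n) z p

noncomputable def coeffVec (n : ℕ) (z : (Fin (n + 1) → ℝ) → ℝ) (p : Fin (n + 1) → ℝ) :
    Fin (n + 1) → ℝ :=
  coeffB n z p • Pi.single (ynIdx n) 1 - coeffC n z p • Pi.single (xnIdx n) 1

section GraphMap
variable {n : ℕ} {y : Fin (n - 1) → (Fin (n + 1) → ℝ) → ℝ} {z : (Fin (n + 1) → ℝ) → ℝ}
  {p : Fin (n + 1) → ℝ}

theorem pullbackForm_apply (v : Fin (n + 1) → ℝ) :
    pullbackForm n y z p v = contactForm n (graphMap n y z p) (fderiv ℝ (graphMap n y z) p v) :=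
  contactFormCLM_apply _ _ _

theorem graphMap_apply_of_lt {i : ℕ} (hi : i < n) :
    (fun q => graphMap n y z q ⟨i, by omega⟩) = fun q => q ⟨i, by omega⟩ := by
  simp [graphMap, hi]

theorem graphMap_apply_last (hn : 0 < n) :
    (fun q => graphMap n y z q ⟨2 * n, by omega⟩) = z := by
  funext q
  simp only [graphMap]
  rw [dif_neg (by omega), dif_neg (by omega), dif_neg (by omega)]

theorem graphMap_apply_xIdx (a : Fin (n - 1)) :
    graphMap n y z p ⟨n + a, by omega⟩ = y a p := by
  have := a.isLt
  simp [graphMap, show n + a < 2 * n - 1 by omega]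

theorem graphMap_apply_xnIdx (hn : 0 < n) :
    graphMap n y z p ⟨n + (n - 1), by omega⟩ = p (ynIdx n) := by
  simp only [graphMap]
  rw [dif_neg (by omega), dif_neg (by omega), dif_pos (by omega)]

theorem differentiableAt_graphMap_apply (hy : ∀ a, DifferentiableAt ℝ (y a) p)
    (hz : DifferentiableAt ℝ z p) (i : Fin (2 * n + 1)) :
    DifferentiableAt ℝ (fun q => graphMap n y z q i) p := by
  unfold graphMap
  split_ifs
  exacts [differentiableAt_apply _ p, hy _, differentiableAt_apply _ p, hz]

theorem pullbackForm_apply_eq (hn : 0 < n) (hy : ∀ a, DifferentiableAt ℝ (y a) p)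
    (hz : DifferentiableAt ℝ z p) (v : Fin (n + 1) → ℝ) :
    pullbackForm n y z p v
      = fderiv ℝ z p v - ∑ i : Fin n, graphMap n y z p ⟨n + i, by omega⟩ * v ⟨i, by omega⟩ := by
  have hF := fderiv_pi (differentiableAt_graphMap_apply hy hz)
  rw [pullbackForm_apply, contactForm, hF]
  simp only [ContinuousLinearMap.pi_apply]
  rw [graphMap_apply_last hn]
  congr! with i
  rw [graphMap_apply_of_lt i.isLt, fderiv_apply]
  · simp
  · exact differentiableAt_id

theorem pullbackForm_single_of_lt (hn : 0 < n) (hy : ∀ a, DifferentiableAt ℝ (y a) p)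
    (hz : DifferentiableAt ℝ z p) {j : Fin (n + 1)} (hj : (j : ℕ) < n) :
    pullbackForm n y z p (Pi.single j 1) = pd j z p - graphMap n y z p ⟨n + j, by omega⟩ := by
  rw [pullbackForm_apply_eq hn hy hz, Finset.sum_eq_single ⟨j, hj⟩]
  · simp [pd]
  · intro i _ hi
    rw [Pi.single_eq_of_ne (by simpa [Fin.ext_iff] using hi), mul_zero]
  · simp

theorem pullbackForm_single_xIdx (hn : 0 < n) (hy : ∀ a, DifferentiableAt ℝ (y a) p)
    (hz : DifferentiableAt ℝ z p) (a : Fin (n - 1)) :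
    pullbackForm n y z p (Pi.single (xIdx a) 1) = pd (xIdx a) z p - y a p := by
  rw [pullbackForm_single_of_lt hn hy hz (by simp [xIdx]; omega)]
  exact congrArg _ (graphMap_apply_xIdx a)

theorem pullbackForm_single_xnIdx (hn : 0 < n) (hy : ∀ a, DifferentiableAt ℝ (y a) p)
    (hz : DifferentiableAt ℝ z p) :
    pullbackForm n y z p (Pi.single (xnIdx n) 1) = coeffB n z p := by
  rw [pullbackForm_single_of_lt hn hy hz (by simp [xnIdx]; omega)]
  exact congrArg _ (graphMap_apply_xnIdx hn)

theorem pullbackForm_single_ynIdx (hn : 0 < n) (hy : ∀ a, DifferentiableAt ℝ (y a) p)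
    (hz : DifferentiableAt ℝ z p) :
    pullbackForm n y z p (Pi.single (ynIdx n) 1) = coeffC n z p := by
  rw [pullbackForm_apply_eq hn hy hz, Finset.sum_eq_zero fun i _ => ?_, sub_zero]
  · rfl
  · rw [Pi.single_eq_of_ne (by simp [ynIdx, Fin.ext_iff]; omega), mul_zero]

theorem pullbackForm_eq_zero_iff (hn : 0 < n) (hy : ∀ a, DifferentiableAt ℝ (y a) p)
    (hz : DifferentiableAt ℝ z p) (hE3 : ∀ a, E3 y z a p = 0) :
    pullbackForm n y z p = 0 ↔ coeffB n z p = 0 ∧ coeffC n z p = 0 := by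
  refine ⟨fun h => ?_, fun ⟨hB, hC⟩ => ContinuousLinearMap.eq_zero_of_apply_single _ fun j => ?_⟩
  · rw [← pullbackForm_single_xnIdx hn hy hz, ← pullbackForm_single_ynIdx hn hy hz, h]
    simp
  rcases exists_eq_xIdx_or_eq_xnIdx_or_eq_ynIdx j with ⟨a, rfl⟩ | rfl | rfl
  · rw [pullbackForm_single_xIdx hn hy hz]
    -- (E3) reads `A_a = B ∂y_a/∂y_n - C ∂y_a/∂x_n`.
    unfold E3 coeffB coeffC at *
    linear_combination hE3 a + pd (ynIdx n) (y a) p * hB - pd (xnIdx n) (y a) p * hC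
  · rw [pullbackForm_single_xnIdx hn hy hz, hB]
  · rw [pullbackForm_single_ynIdx hn hy hz, hC]

end GraphMap

theorem norm_prod_apply_apply_le {E : Type*} [NormedAddCommGroup E] [NormedSpace ℝ E]
    (D : E →L[ℝ] E →L[ℝ] ℝ) {e₁ e₂ : E} (h₁ : ‖e₁‖ ≤ 1) (h₂ : ‖e₂‖ ≤ 1) (w : E) :
    ‖(D e₁ w, D e₂ w)‖ ≤ ‖D‖ * ‖w‖ := by
  have key : ∀ e : E, ‖e‖ ≤ 1 → ‖D e w‖ ≤ ‖D‖ * ‖w‖ := fun e he =>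
    calc ‖D e w‖ ≤ ‖D‖ * ‖e‖ * ‖w‖ := D.le_opNorm₂ e w
      _ ≤ ‖D‖ * 1 * ‖w‖ := by gcongr
      _ = ‖D‖ * ‖w‖ := by ring
  rw [Prod.norm_def]
  exact max_le (key e₁ h₁) (key e₂ h₂)

theorem norm_coeffVec_le {n : ℕ} (z : (Fin (n + 1) → ℝ) → ℝ) (p : Fin (n + 1) → ℝ) :
    ‖coeffVec n z p‖ ≤ 2 * ‖(coeffB n z p, coeffC n z p)‖ :=
  calc ‖coeffVec n z p‖
      ≤ ‖coeffB n z p • (Pi.single (ynIdx n) 1 : Fin (n + 1) → ℝ)‖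
        + ‖coeffC n z p • (Pi.single (xnIdx n) 1 : Fin (n + 1) → ℝ)‖ := norm_sub_le _ _
    _ = ‖coeffB n z p‖ + ‖coeffC n z p‖ := by simp [norm_smul, Pi.norm_single]
    _ ≤ 2 * ‖(coeffB n z p, coeffC n z p)‖ := by
      linarith [norm_fst_le (coeffB n z p, coeffC n z p), norm_snd_le (coeffB n z p, coeffC n z p)]

theorem norm_apply_coeffVec_le {n : ℕ} (z : (Fin (n + 1) → ℝ) → ℝ) (p : Fin (n + 1) → ℝ)
    (D : (Fin (n + 1) → ℝ) →L[ℝ] (Fin (n + 1) → ℝ) →L[ℝ] ℝ) :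
    ‖(D (Pi.single (xnIdx n) 1) (coeffVec n z p), D (Pi.single (ynIdx n) 1) (coeffVec n z p))‖
      ≤ 2 * ‖D‖ * ‖(coeffB n z p, coeffC n z p)‖ :=
  calc _ ≤ ‖D‖ * ‖coeffVec n z p‖ :=
        norm_prod_apply_apply_le D (by simp [Pi.norm_single]) (by simp [Pi.norm_single]) _
    _ ≤ ‖D‖ * (2 * ‖(coeffB n z p, coeffC n z p)‖) := by gcongr; exact norm_coeffVec_le z p
    _ = 2 * ‖D‖ * ‖(coeffB n z p, coeffC n z p)‖ := by ring

section Flow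
variable {n : ℕ} {y : Fin (n - 1) → (Fin (n + 1) → ℝ) → ℝ} {z : (Fin (n + 1) → ℝ) → ℝ}
  {k : Fin (n - 1)} {p : Fin (n + 1) → ℝ}

theorem hasFDerivAt_coeffB (hz : ContDiffAt ℝ 2 z p) :
    HasFDerivAt (coeffB n z) ((fderiv ℝ (fderiv ℝ z) p).flip (Pi.single (xnIdx n) 1)
      - ContinuousLinearMap.proj (ynIdx n)) p :=
  (hz.hasFDerivAt_fderiv_apply _).sub (hasFDerivAt_apply _ p)

theorem hasFDerivAt_coeffC (hz : ContDiffAt ℝ 2 z p) :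
    HasFDerivAt (coeffC n z) ((fderiv ℝ (fderiv ℝ z) p).flip (Pi.single (ynIdx n) 1)) p :=
  hz.hasFDerivAt_fderiv_apply _

/-- (E3) differentiated in the direction `w`. -/
theorem fderiv_fderiv_apply_Vt (hy : ContDiffAt ℝ 2 (y k) p) (hz : ContDiffAt ℝ 2 z p)
    (hE3 : E3 y z k =ᶠ[𝓝 p] 0) (w : Fin (n + 1) → ℝ) :
    fderiv ℝ (fderiv ℝ z) p w (Vt n y k p) + w (ynIdx n) * pd (ynIdx n) (y k) p
        - fderiv ℝ (y k) p w
      = fderiv ℝ (fderiv ℝ (y k)) p w (coeffVec n z p) := by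
  have hzero : HasFDerivAt (E3 y z k) (0 : (Fin (n + 1) → ℝ) →L[ℝ] ℝ) p :=
    (hasFDerivAt_const 0 p).congr_of_eventuallyEq hE3
  have hE3' : HasFDerivAt (E3 y z k) _ p :=
    (((hz.hasFDerivAt_fderiv_apply (Pi.single (xIdx k) 1)).sub
      ((hasFDerivAt_coeffB hz).mul (hy.hasFDerivAt_fderiv_apply (Pi.single (ynIdx n) 1)))).add
      ((hasFDerivAt_coeffC hz).mul (hy.hasFDerivAt_fderiv_apply (Pi.single (xnIdx n) 1)))).sub
      (hy.differentiableAt two_ne_zero).hasFDerivAt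
  have hw := congrArg (· w) (hE3'.unique hzero)
  simp only [sub_apply, add_apply, smul_apply, zero_apply, smul_eq_mul,
    ContinuousLinearMap.flip_apply, ContinuousLinearMap.proj_apply, Vt, pd, map_add, map_sub,
    map_smul, coeffVec] at hw ⊢
  linear_combination hw

theorem hasDerivAt_coeffB_coeffC_comp (hn : 2 ≤ n) {γ : ℝ → Fin (n + 1) → ℝ} {t : ℝ}
    (hy : ContDiffAt ℝ 2 (y k) (γ t)) (hz : ContDiffAt ℝ 2 z (γ t))
    (hE3 : E3 y z k =ᶠ[𝓝 (γ t)] 0) (hγ : HasDerivAt γ (Vt n y k (γ t)) t) :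
    HasDerivAt (fun s => (coeffB n z (γ s), coeffC n z (γ s)))
      (fderiv ℝ (fderiv ℝ (y k)) (γ t) (Pi.single (xnIdx n) 1) (coeffVec n z (γ t)),
        fderiv ℝ (fderiv ℝ (y k)) (γ t) (Pi.single (ynIdx n) 1) (coeffVec n z (γ t))) t := by
  refine (((hasFDerivAt_coeffB hz).comp_hasDerivAt t hγ).prodMk
    ((hasFDerivAt_coeffC hz).comp_hasDerivAt t hγ)).congr_deriv (Prod.ext ?_ ?_)
  · have h := fderiv_fderiv_apply_Vt hy hz hE3 (Pi.single (xnIdx n) 1)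
    rw [Pi.single_eq_of_ne (ynIdx_ne_xnIdx hn)] at h
    simp [← h, hz.fderiv_fderiv_comm (Vt n y k (γ t)), Vt_apply_ynIdx hn, pd]
  · have h := fderiv_fderiv_apply_Vt hy hz hE3 (Pi.single (ynIdx n) 1)
    simp [← h, hz.fderiv_fderiv_comm (Vt n y k (γ t)), pd]

end Flow

theorem singular_locus_invariant_general (n : ℕ) (hn : 2 ≤ n) (U : Set (Fin (n + 1) → ℝ)) (hU : IsOpen U)
    (y : Fin (n - 1) → (Fin (n + 1) → ℝ) → ℝ) (z : (Fin (n + 1) → ℝ) → ℝ)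
    (hy : ∀ a, ContDiffOn ℝ (⊤ : ℕ∞) (y a) U) (hz : ContDiffOn ℝ (⊤ : ℕ∞) z U)
    (hE3 : ∀ a, ∀ p ∈ U, E3 y z a p = 0)
    (k : Fin (n - 1)) (I : Set ℝ) (hI : I.OrdConnected)
    (γ : ℝ → Fin (n + 1) → ℝ)
    (hγU : ∀ t ∈ I, γ t ∈ U)
    (hγ : ∀ t ∈ I, HasDerivAt γ (Vt n y k (γ t)) t)
    (t₀ : ℝ) (ht₀ : t₀ ∈ I)
    (hvanish : ∀ v : Fin (n + 1) → ℝ,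
      contactForm n (graphMap n y z (γ t₀)) (fderiv ℝ (graphMap n y z) (γ t₀) v) = 0) :
    ∀ t ∈ I, ∀ v : Fin (n + 1) → ℝ,
      contactForm n (graphMap n y z (γ t)) (fderiv ℝ (graphMap n y z) (γ t) v) = 0 := by
  have hy2 a : ContDiffOn ℝ 2 (y a) U := (hy a).of_le (WithTop.coe_le_coe.2 le_top)
  have hz2 : ContDiffOn ℝ 2 z U := hz.of_le (WithTop.coe_le_coe.2 le_top)
  have hμ {p} (hp : p ∈ U) := pullbackForm_eq_zero_iff (by omega)
    (fun a => ((hy2 a).differentiableOn two_ne_zero).differentiableAt (hU.mem_nhds hp))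
    ((hz2.differentiableOn two_ne_zero).differentiableAt (hU.mem_nhds hp)) (hE3 · p hp)
  have hODE t (ht : t ∈ I) := hasDerivAt_coeffB_coeffC_comp hn
    ((hy2 k).contDiffAt (hU.mem_nhds (hγU t ht))) (hz2.contDiffAt (hU.mem_nhds (hγU t ht)))
    (eventually_of_mem (hU.mem_nhds (hγU t ht)) (hE3 k)) (hγ t ht)
  have hD : ContinuousOn (fun t => fderiv ℝ (fderiv ℝ (y k)) (γ t)) I :=
    ((hy2 k).continuousOn_fderiv_fderiv hU).comp
      (fun t ht => (hγ t ht).continuousAt.continuousWithinAt) hγU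
  have hBC := hI.eq_zero_of_norm_deriv_le_mul_norm
    (continuousOn_const.mul
      (ContinuousOn.norm (E := (Fin (n + 1) → ℝ) →L[ℝ] (Fin (n + 1) → ℝ) →L[ℝ] ℝ) hD))
    hODE (fun t _ => norm_apply_coeffVec_le z (γ t) _) ht₀
    (Prod.ext_iff.2 ((hμ (hγU t₀ ht₀)).1
      (ContinuousLinearMap.ext fun v => (pullbackForm_apply v).trans (hvanish v))))
  intro t ht v
  rw [← pullbackForm_apply, (hμ (hγU t ht)).2 (Prod.ext_iff.1 (hBC t ht))]
  rfl

/-- The singular locus `S = {p ∈ U : μ_p = 0}` of the pulled-back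
contact form `μ = F*α` is invariant under the flow of `Ṽ_k`. -/
theorem singular_locus_invariant (n : ℕ) (hn : 2 ≤ n) (U : Set (Fin (n + 1) → ℝ)) (hU : IsOpen U)
    (y : Fin (n - 1) → (Fin (n + 1) → ℝ) → ℝ) (z : (Fin (n + 1) → ℝ) → ℝ)
    (hy : ∀ a, ContDiffOn ℝ (⊤ : ℕ∞) (y a) U) (hz : ContDiffOn ℝ (⊤ : ℕ∞) z U)
    (hE1 : ∀ a b, ∀ p ∈ U, E1 y z a b p = 0)
    (hE2 : ∀ a b, ∀ p ∈ U, E2 y z a b p = 0)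
    (hE3 : ∀ a, ∀ p ∈ U, E3 y z a p = 0)
    (k : Fin (n - 1)) (I : Set ℝ) (hI : I.OrdConnected)
    (γ : ℝ → Fin (n + 1) → ℝ)
    (hγU : ∀ t ∈ I, γ t ∈ U)
    (hγ : ∀ t ∈ I, HasDerivAt γ (Vt n y k (γ t)) t)
    (t₀ : ℝ) (ht₀ : t₀ ∈ I)
    (hvanish : ∀ v : Fin (n + 1) → ℝ,
      contactForm n (graphMap n y z (γ t₀)) (fderiv ℝ (graphMap n y z) (γ t₀) v) = 0) :
    ∀ t ∈ I, ∀ v : Fin (n + 1) → ℝ,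
      contactForm n (graphMap n y z (γ t)) (fderiv ℝ (graphMap n y z) (γ t) v) = 0 :=
  singular_locus_invariant_general n hn U hU y z hy hz hE3 k I hI γ hγU hγ t₀ ht₀ hvanish
end
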